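/- One-sided rank-truncated projection perturbation bounds (Lemma 8.6): Under the stated assumptions, ‖A − C̃_k C̃_k† Ã‖_F ≤ 2‖E_J‖_F · ‖C† A‖_F + ‖E‖_F, and ‖A − Ã R̃_k† R̃_k‖_F ≤ 2‖E_I‖_F · ‖A R†‖_F + ‖E‖_F, where C̃_k and R̃_k are best rank-k approximations of C̃ and R̃. -/

import Mathlib

open Matrix

noncomputable section

variable {𝕂 : Type} [RCLike 𝕂]

/-- The Frobenius norm of a matrix. -/
noncomputable def frobNorm {m n : ℕ} (M : Matrix (Fin m) (Fin n) 𝕂) : ℝ :=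
  Real.sqrt (∑ i, ∑ j, ‖M i j‖ ^ 2)

/-- The `i`-th largest singular value of a matrix (1-indexed), i.e. the `i`-th largest
square root of an eigenvalue of `Mᴴ * M`. -/
noncomputable def sigma {m n : ℕ} (M : Matrix (Fin m) (Fin n) 𝕂) (i : ℕ) : ℝ :=
  ((List.ofFn fun j : Fin n =>
      Real.sqrt ((Matrix.isHermitian_conjTranspose_mul_self M).eigenvalues j)).insertionSort
      (· ≥ ·)).getD (i - 1) 0

/-- The spectral norm: the largest singular value. -/
noncomputable def specNorm {m n : ℕ} (M : Matrix (Fin m) (Fin n) 𝕂) : ℝ := sigma M 1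

/-- `P` is the Moore–Penrose pseudoinverse of `M`: the four Penrose conditions. -/
def IsMPInv {m n : ℕ} (M : Matrix (Fin m) (Fin n) 𝕂) (P : Matrix (Fin n) (Fin m) 𝕂) : Prop :=
  M * P * M = M ∧ P * M * P = P ∧ (M * P)ᴴ = M * P ∧ (P * M)ᴴ = P * M

/-- `Mr` is a truncated SVD of order `r` of `M`, i.e. a best rank-`r` approximation of `M`
(equivalently, a matrix obtained from an SVD of `M` by keeping the `r` largest singular
values and zeroing out the rest). -/
def IsTruncSVD {m n : ℕ} (M Mr : Matrix (Fin m) (Fin n) 𝕂) (r : ℕ) : Prop :=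
  Mr.rank ≤ r ∧ ∀ B : Matrix (Fin m) (Fin n) 𝕂, B.rank ≤ r → frobNorm (M - Mr) ≤ frobNorm (M - B)

/-- `Mt = [M]_τ`: the matrix obtained from an SVD of `M` by setting to zero every singular
value strictly less than `τ` (i.e. keeping exactly the singular values `≥ τ`). -/
def IsThresh {m n : ℕ} (M Mt : Matrix (Fin m) (Fin n) 𝕂) (τ : ℝ) : Prop :=
  IsTruncSVD M Mt (Nat.card {i : Fin (min m n) // τ ≤ sigma M ((i : ℕ) + 1)})

/-- The volume of a matrix: the product of its `min p q` largest singular values. -/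
noncomputable def vol {p q : ℕ} (M : Matrix (Fin p) (Fin q) 𝕂) : ℝ :=
  ∏ i ∈ Finset.range (min p q), sigma M (i + 1)

end

/-! With `P = C̃ₖ C̃ₖ†`, the orthogonal projector onto the range of `C̃ₖ`, the rank
condition `rank C = rank A` makes the columns of `C` span those of `A`, so `A = C C† A` and
`A - P Ã = (I - P) C · C† A - P E`. As `I - P` kills `C̃ₖ`,
`(I - P) C = (I - P)(-E_J) + (I - P)(C̃ - C̃ₖ)`, and both terms have Frobenius norm at most
`‖E_J‖_F`: the second because `C` has rank `k` and `C̃ₖ` is a best rank-`k` approximation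
of `C̃ = C + E_J`. The row bound is the column bound for `Aᴴ`. -/

section RangeOfSubmatrix

variable {K : Type*} [Field K] {m n q : Type*} [Fintype n] [Fintype q]

theorem Matrix.range_mulVecLin_submatrix_id_le (A : Matrix m n K) (κ : q → n) :
    LinearMap.range (A.submatrix id κ).mulVecLin ≤ LinearMap.range A.mulVecLin := by
  rw [Matrix.range_mulVecLin, Matrix.range_mulVecLin]
  exact Submodule.span_mono (Set.range_subset_iff.2 fun j => ⟨κ j, rfl⟩)

theorem Matrix.range_mulVecLin_submatrix_id_eq_of_rank_eq (A : Matrix m n K) (κ : q → n)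
    (h : (A.submatrix id κ).rank = A.rank) :
    LinearMap.range (A.submatrix id κ).mulVecLin = LinearMap.range A.mulVecLin :=
  Submodule.eq_of_le_of_finrank_le (A.range_mulVecLin_submatrix_id_le κ) h.ge

variable [Fintype m]

theorem Matrix.mul_mul_eq_self_of_range_le {C : Matrix m q K} {G : Matrix q m K}
    {A : Matrix m n K} (hG : C * G * C = C)
    (h : LinearMap.range A.mulVecLin ≤ LinearMap.range C.mulVecLin) : C * G * A = A := by
  refine Matrix.ext_iff_mulVec.mpr fun v => ?_
  obtain ⟨y, hy⟩ : A *ᵥ v ∈ LinearMap.range C.mulVecLin := h ⟨v, rfl⟩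
  rw [Matrix.mulVecLin_apply] at hy
  rw [← Matrix.mulVec_mulVec, ← hy, Matrix.mulVec_mulVec, hG]

end RangeOfSubmatrix

section Frobenius

attribute [local instance] Matrix.frobeniusNormedAddCommGroup

variable {𝕂 : Type*} [RCLike 𝕂] {m n : Type*} [Fintype m] [Fintype n]

theorem Matrix.frobenius_norm_sq_eq_re_trace (X : Matrix m n 𝕂) :
    ‖X‖ ^ 2 = RCLike.re (Xᴴ * X).trace := by
  rw [Matrix.frobenius_norm_def, ← Real.rpow_natCast, ← Real.rpow_mul (by positivity)]
  simp only [Nat.cast_ofNat, one_div, inv_mul_cancel₀ (two_ne_zero (α := ℝ)), Real.rpow_one,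
    Real.rpow_two, Matrix.trace, Matrix.diag_apply, Matrix.mul_apply, Matrix.conjTranspose_apply,
    RCLike.star_def, RCLike.conj_mul, map_sum, ← RCLike.ofReal_pow, RCLike.ofReal_re]
  exact Finset.sum_comm

variable {P : Matrix m m 𝕂}

theorem IsStarProjection.frobenius_norm_mul_sq (hP : IsStarProjection P) (X : Matrix m n 𝕂) :
    ‖P * X‖ ^ 2 = RCLike.re (Xᴴ * P * X).trace := by
  have hPh : Pᴴ = P := hP.isSelfAdjoint
  rw [Matrix.frobenius_norm_sq_eq_re_trace, Matrix.conjTranspose_mul, hPh, Matrix.mul_assoc,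
    ← Matrix.mul_assoc P, hP.isIdempotentElem.eq, Matrix.mul_assoc]

variable [DecidableEq m]

theorem IsStarProjection.frobenius_norm_sq_eq_add (hP : IsStarProjection P)
    (X : Matrix m n 𝕂) : ‖X‖ ^ 2 = ‖P * X‖ ^ 2 + ‖X - P * X‖ ^ 2 := by
  have hsub : X - P * X = (1 - P) * X := by rw [Matrix.sub_mul, Matrix.one_mul]
  rw [hsub, hP.frobenius_norm_mul_sq, hP.one_sub.frobenius_norm_mul_sq,
    Matrix.frobenius_norm_sq_eq_re_trace, ← map_add, ← Matrix.trace_add, Matrix.mul_sub,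
    Matrix.mul_one, Matrix.sub_mul, add_sub_cancel]

theorem IsStarProjection.frobenius_norm_mul_le (hP : IsStarProjection P) (X : Matrix m n 𝕂) :
    ‖P * X‖ ≤ ‖X‖ := by
  have := hP.frobenius_norm_sq_eq_add X
  nlinarith [norm_nonneg (P * X), norm_nonneg X, sq_nonneg ‖X - P * X‖]

theorem IsStarProjection.frobenius_norm_sub_mul_le (hP : IsStarProjection P)
    (X : Matrix m n 𝕂) : ‖X - P * X‖ ≤ ‖X‖ := by
  have := hP.frobenius_norm_sq_eq_add X
  nlinarith [norm_nonneg (X - P * X), norm_nonneg X, sq_nonneg ‖P * X‖]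

end Frobenius

section TruncatedProjection

attribute [local instance] Matrix.frobeniusNormedAddCommGroup

open scoped ComplexOrder

variable {𝕂 : Type} [RCLike 𝕂] {m n q : ℕ}

theorem frobNorm_eq_frobenius_norm (M : Matrix (Fin m) (Fin n) 𝕂) : frobNorm M = ‖M‖ := by
  rw [Matrix.frobenius_norm_def, frobNorm, Real.sqrt_eq_rpow]
  norm_cast

theorem frobNorm_conjTranspose (M : Matrix (Fin m) (Fin n) 𝕂) : frobNorm Mᴴ = frobNorm M := by
  simp only [frobNorm_eq_frobenius_norm, Matrix.frobenius_norm_conjTranspose]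

theorem IsMPInv.conjTranspose {M : Matrix (Fin m) (Fin n) 𝕂} {P : Matrix (Fin n) (Fin m) 𝕂}
    (h : IsMPInv M P) : IsMPInv Mᴴ Pᴴ := by
  obtain ⟨h₁, h₂, h₃, h₄⟩ := h
  refine ⟨?_, ?_, ?_, ?_⟩
  · rw [← conjTranspose_mul, ← conjTranspose_mul, ← Matrix.mul_assoc, h₁]
  · rw [← conjTranspose_mul, ← conjTranspose_mul, ← Matrix.mul_assoc, h₂]
  · rw [← conjTranspose_mul, conjTranspose_conjTranspose, h₄]
  · rw [← conjTranspose_mul, conjTranspose_conjTranspose, h₃]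

theorem IsMPInv.isStarProjection_mul {M : Matrix (Fin m) (Fin n) 𝕂}
    {P : Matrix (Fin n) (Fin m) 𝕂} (h : IsMPInv M P) : IsStarProjection (M * P) where
  isIdempotentElem := by rw [IsIdempotentElem, ← Matrix.mul_assoc, h.1]
  isSelfAdjoint := h.2.2.1

theorem IsTruncSVD.conjTranspose {M Mr : Matrix (Fin m) (Fin n) 𝕂} {r : ℕ}
    (h : IsTruncSVD M Mr r) : IsTruncSVD Mᴴ Mrᴴ r := by
  refine ⟨by rw [Matrix.rank_conjTranspose]; exact h.1, fun B hB => ?_⟩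
  have := h.2 Bᴴ (by rwa [Matrix.rank_conjTranspose])
  rwa [← frobNorm_conjTranspose, conjTranspose_sub, conjTranspose_conjTranspose,
    ← frobNorm_conjTranspose (Mᴴ - B), conjTranspose_sub, conjTranspose_conjTranspose,
    conjTranspose_conjTranspose]

theorem IsTruncSVD.frobNorm_add_sub_le {C F Ck : Matrix (Fin m) (Fin n) 𝕂} {k : ℕ}
    (h : IsTruncSVD (C + F) Ck k) (hC : C.rank ≤ k) : frobNorm (C + F - Ck) ≤ frobNorm F := by
  simpa using h.2 C hC

theorem frobNorm_sub_proj_mul_le_two_mul {P : Matrix (Fin m) (Fin m) 𝕂}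
    (hP : IsStarProjection P) {C F Ck : Matrix (Fin m) (Fin q) 𝕂} {k : ℕ} (hPCk : P * Ck = Ck)
    (hCk : IsTruncSVD (C + F) Ck k) (hC : C.rank ≤ k) :
    frobNorm (C - P * C) ≤ 2 * frobNorm F := by
  have hsplit : C - P * C = (-F - P * -F) + ((C + F - Ck) - P * (C + F - Ck)) := by
    rw [Matrix.mul_sub, Matrix.mul_add, hPCk, Matrix.mul_neg]
    abel
  have hbest := hCk.frobNorm_add_sub_le hC
  rw [hsplit]
  simp only [frobNorm_eq_frobenius_norm] at hbest ⊢
  calc ‖(-F - P * -F) + ((C + F - Ck) - P * (C + F - Ck))‖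
      ≤ ‖-F‖ + ‖C + F - Ck‖ :=
        (norm_add_le _ _).trans
          (add_le_add (hP.frobenius_norm_sub_mul_le _) (hP.frobenius_norm_sub_mul_le _))
    _ ≤ 2 * ‖F‖ := by rw [norm_neg]; linarith

theorem frobNorm_sub_proj_mul_add_le {P : Matrix (Fin m) (Fin m) 𝕂} (hP : IsStarProjection P)
    {A E : Matrix (Fin m) (Fin n) 𝕂} {C : Matrix (Fin m) (Fin q) 𝕂}
    {G : Matrix (Fin q) (Fin m) 𝕂}
    (hCG : C * G * A = A) :
    frobNorm (A - P * (A + E)) ≤ frobNorm (C - P * C) * frobNorm (G * A) + frobNorm E := by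
  have hsplit : A - P * (A + E) = (C - P * C) * (G * A) - P * E := by
    rw [Matrix.sub_mul, ← Matrix.mul_assoc, hCG, Matrix.mul_assoc P, ← Matrix.mul_assoc C, hCG,
      Matrix.mul_add]
    abel
  rw [hsplit]
  simp only [frobNorm_eq_frobenius_norm]
  exact (norm_sub_le _ _).trans
    (add_le_add (Matrix.frobenius_norm_mul _ _) (hP.frobenius_norm_mul_le E))

theorem frobNorm_sub_truncSVD_proj_mul_le (A E : Matrix (Fin m) (Fin n) 𝕂) (κ : Fin q → Fin n)
    {k : ℕ} (hC : (A.submatrix id κ).rank = A.rank) (hk : A.rank ≤ k)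
    {Cp : Matrix (Fin q) (Fin m) 𝕂}
    (hCp : A.submatrix id κ * Cp * A.submatrix id κ = A.submatrix id κ)
    {Ctk : Matrix (Fin m) (Fin q) 𝕂} (hCtk : IsTruncSVD ((A + E).submatrix id κ) Ctk k)
    {Ctkp : Matrix (Fin q) (Fin m) 𝕂} (hCtkp : IsMPInv Ctk Ctkp) :
    frobNorm (A - Ctk * Ctkp * (A + E)) ≤
      2 * frobNorm (E.submatrix id κ) * frobNorm (Cp * A) + frobNorm E := by
  have hCpA : A.submatrix id κ * Cp * A = A :=
    Matrix.mul_mul_eq_self_of_range_le hCp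
      (A.range_mulVecLin_submatrix_id_eq_of_rank_eq κ hC).ge
  have hP := hCtkp.isStarProjection_mul
  rw [Matrix.submatrix_add] at hCtk
  calc frobNorm (A - Ctk * Ctkp * (A + E))
      ≤ frobNorm (A.submatrix id κ - Ctk * Ctkp * A.submatrix id κ) * frobNorm (Cp * A) +
          frobNorm E := frobNorm_sub_proj_mul_add_le hP hCpA
    _ ≤ 2 * frobNorm (E.submatrix id κ) * frobNorm (Cp * A) + frobNorm E := by
      gcongr
      · exact Real.sqrt_nonneg _
      · exact frobNorm_sub_proj_mul_le_two_mul hP hCtkp.1 hCtk (hC.trans_le hk)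

theorem frobNorm_sub_mul_truncSVD_proj_le {p : ℕ} (A E : Matrix (Fin m) (Fin n) 𝕂)
    (ι : Fin p → Fin m) {k : ℕ} (hR : (A.submatrix ι id).rank = A.rank) (hk : A.rank ≤ k)
    {Rp : Matrix (Fin n) (Fin p) 𝕂}
    (hRp : A.submatrix ι id * Rp * A.submatrix ι id = A.submatrix ι id)
    {Rtk : Matrix (Fin p) (Fin n) 𝕂} (hRtk : IsTruncSVD ((A + E).submatrix ι id) Rtk k)
    {Rtkp : Matrix (Fin n) (Fin p) 𝕂} (hRtkp : IsMPInv Rtk Rtkp) :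
    frobNorm (A - (A + E) * Rtkp * Rtk) ≤
      2 * frobNorm (E.submatrix ι id) * frobNorm (A * Rp) + frobNorm E := by
  have hRtkH := hRtk.conjTranspose
  rw [conjTranspose_submatrix, conjTranspose_add] at hRtkH
  have := frobNorm_sub_truncSVD_proj_mul_le Aᴴ Eᴴ ι
    (by rw [← conjTranspose_submatrix, Matrix.rank_conjTranspose, Matrix.rank_conjTranspose, hR])
    (by rwa [Matrix.rank_conjTranspose])
    (by simpa only [conjTranspose_submatrix, conjTranspose_mul, Matrix.mul_assoc]
      using congrArg conjTranspose hRp)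
    hRtkH hRtkp.conjTranspose
  rwa [← conjTranspose_submatrix, ← conjTranspose_add, ← conjTranspose_mul,
    ← conjTranspose_mul, ← conjTranspose_mul, ← conjTranspose_sub, frobNorm_conjTranspose,
    frobNorm_conjTranspose, frobNorm_conjTranspose, frobNorm_conjTranspose,
    ← Matrix.mul_assoc] at this

end TruncatedProjection

theorem one_sided_rank_truncated_projection_perturbation_general {𝕂 : Type} [RCLike 𝕂]
    {m n k p q : ℕ}
    (A E : Matrix (Fin m) (Fin n) 𝕂)
    (hrankA : A.rank = k)
    (ι : Fin p ↪ Fin m) (κ : Fin q ↪ Fin n)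
    (hrankC : (A.submatrix id ⇑κ).rank = k)
    (hrankR : (A.submatrix ⇑ι id).rank = k)
    (Cp : Matrix (Fin q) (Fin m) 𝕂) (hCp : IsMPInv (A.submatrix id ⇑κ) Cp)
    (Rp : Matrix (Fin n) (Fin p) 𝕂) (hRp : IsMPInv (A.submatrix ⇑ι id) Rp)
    (Ctk : Matrix (Fin m) (Fin q) 𝕂) (hCtk : IsTruncSVD ((A + E).submatrix id ⇑κ) Ctk k)
    (Ctkp : Matrix (Fin q) (Fin m) 𝕂) (hCtkp : IsMPInv Ctk Ctkp)
    (Rtk : Matrix (Fin p) (Fin n) 𝕂) (hRtk : IsTruncSVD ((A + E).submatrix ⇑ι id) Rtk k)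
    (Rtkp : Matrix (Fin n) (Fin p) 𝕂) (hRtkp : IsMPInv Rtk Rtkp) :
    frobNorm (A - Ctk * Ctkp * (A + E)) ≤
        2 * frobNorm (E.submatrix id ⇑κ) * frobNorm (Cp * A) + frobNorm E ∧
    frobNorm (A - (A + E) * Rtkp * Rtk) ≤
        2 * frobNorm (E.submatrix ⇑ι id) * frobNorm (A * Rp) + frobNorm E :=
  ⟨frobNorm_sub_truncSVD_proj_mul_le A E κ (hrankC.trans hrankA.symm) hrankA.le hCp.1 hCtk hCtkp,
    frobNorm_sub_mul_truncSVD_proj_le A E ι (hrankR.trans hrankA.symm) hrankA.le hRp.1 hRtk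
      hRtkp⟩

/-- Lemma 8.6: one-sided rank-truncated projection perturbation bounds. -/
theorem one_sided_rank_truncated_projection_perturbation {𝕂 : Type} [RCLike 𝕂]
    {m n k p q : ℕ}
    (A E : Matrix (Fin m) (Fin n) 𝕂)
    (hrankA : A.rank = k)
    (ι : Fin p ↪ Fin m) (κ : Fin q ↪ Fin n)
    (hrankC : (A.submatrix id ⇑κ).rank = k)
    (hrankU : (A.submatrix ⇑ι ⇑κ).rank = k)
    (hrankR : (A.submatrix ⇑ι id).rank = k)
    (Cp : Matrix (Fin q) (Fin m) 𝕂) (hCp : IsMPInv (A.submatrix id ⇑κ) Cp)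
    (Rp : Matrix (Fin n) (Fin p) 𝕂) (hRp : IsMPInv (A.submatrix ⇑ι id) Rp)
    (Ctk : Matrix (Fin m) (Fin q) 𝕂) (hCtk : IsTruncSVD ((A + E).submatrix id ⇑κ) Ctk k)
    (Ctkp : Matrix (Fin q) (Fin m) 𝕂) (hCtkp : IsMPInv Ctk Ctkp)
    (Rtk : Matrix (Fin p) (Fin n) 𝕂) (hRtk : IsTruncSVD ((A + E).submatrix ⇑ι id) Rtk k)
    (Rtkp : Matrix (Fin n) (Fin p) 𝕂) (hRtkp : IsMPInv Rtk Rtkp) :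
    frobNorm (A - Ctk * Ctkp * (A + E)) ≤
        2 * frobNorm (E.submatrix id ⇑κ) * frobNorm (Cp * A) + frobNorm E ∧
    frobNorm (A - (A + E) * Rtkp * Rtk) ≤
        2 * frobNorm (E.submatrix ⇑ι id) * frobNorm (A * Rp) + frobNorm E :=
  one_sided_rank_truncated_projection_perturbation_general A E hrankA ι κ hrankC hrankR Cp hCp Rp
    hRp Ctk hCtk Ctkp hCtkp Rtk hRtk Rtkp hRtkp
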